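/- arXiv:1608.01938 — 4 statements merged into one kernel-verified Lean document; each statement's English description precedes it below -/
import Mathlib

section
/- Let 0 < c < 1, C > 0, and 0 < c' < c/2. For each n, let M_n be a random n × n real symmetric matrix with integer entries such that: (a) for every real number r, the probability that r is an eigenvalue of M_n is at most 2·exp(−n^c); and (b) the probability that M_n has an eigenvalue of absolute value exceeding C√n is at most 2·exp(−n). Then for all sufficiently large n, the probability that M_n has an eigenvalue that is algebraic of degree at most n^(c') is at most exp(−n^c / 2). -/
/-!
The eigenvalues of a symmetric integer matrix are real algebraic integers, and every conjugate of
an eigenvalue is again an eigenvalue. So outside the event that some eigenvalue exceeds `C √n`, an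
eigenvalue of degree at most `D = ⌊n^c'⌋` is a real root of a monic integer polynomial of degree at
most `D` with coefficients bounded by `(2 max (C √n) 1)^D`. These roots form a set, fixed before
sampling, of at most `L^((D+2)^2)` reals with `L = 2(⌈C⌉ + 1)n`, that is `exp (O(n^(2c') log n))`,
which is at most `exp (n^c / 4)` because `2c' < c`. A union bound over this set against the
delocalization estimate `2 exp (-n^c)` gives the claim.
-/

open MeasureTheory Polynomial Filter Real

theorem Matrix.IsSymm.exists_ofReal_eq_of_aeval_charpoly_eq_zero {ι : Type*} [Fintype ι]
    [DecidableEq ι] {A : Matrix ι ι ℤ} (hA : A.IsSymm) {z : ℂ} (hz : aeval z A.charpoly = 0) :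
    ∃ r : ℝ, (r : ℂ) = z := by
  have hB : (A.map (Int.castRingHom ℂ)).IsHermitian := by
    ext i j
    simp [← hA.apply i j]
  rw [aeval_def, eval₂_eq_eval_map, algebraMap_int_eq, ← Matrix.charpoly_map, hB.charpoly_eq,
    eval_prod, Finset.prod_eq_zero_iff] at hz
  obtain ⟨i, -, hi⟩ := hz
  exact ⟨hB.eigenvalues i, (sub_eq_zero.mp (by simpa using hi)).symm⟩

namespace Polynomial

noncomputable def boundedHeightPolys (D B : ℕ) : Finset ℤ[X] :=
  (Fintype.piFinset fun _ : Fin (D + 1) => Finset.Icc (-(B : ℤ)) B).image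
    fun a : Fin (D + 1) → ℤ => ∑ i : Fin (D + 1), monomial i (a i)

noncomputable def boundedHeightRoots (D B : ℕ) : Finset ℝ :=
  (boundedHeightPolys D B).biUnion fun q => (q.aroots ℝ).toFinset

variable {D B : ℕ}

theorem mem_boundedHeightPolys {q : ℤ[X]} (hdeg : q.natDegree ≤ D)
    (hcoeff : ∀ i, |q.coeff i| ≤ B) : q ∈ boundedHeightPolys D B := by
  refine Finset.mem_image.mpr ⟨fun i => q.coeff i, ?_, ?_⟩
  · simpa [Fintype.mem_piFinset, ← abs_le] using fun i : Fin (D + 1) => hcoeff i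
  · rw [Fin.sum_univ_eq_sum_range (fun i => monomial i (q.coeff i))]
    exact (as_sum_range' q (D + 1) (Nat.lt_succ_of_le hdeg)).symm

theorem natDegree_le_of_mem_boundedHeightPolys {q : ℤ[X]} (hq : q ∈ boundedHeightPolys D B) :
    q.natDegree ≤ D := by
  obtain ⟨a, -, rfl⟩ := Finset.mem_image.mp hq
  exact natDegree_sum_le_of_forall_le _ _ fun i _ =>
    (natDegree_monomial_le _).trans (Nat.le_of_lt_succ i.isLt)

theorem card_boundedHeightPolys_le : (boundedHeightPolys D B).card ≤ (2 * B + 1) ^ (D + 1) := by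
  refine Finset.card_image_le.trans_eq ?_
  simp only [Fintype.card_piFinset, Finset.prod_const, Int.card_Icc, Finset.card_univ,
    Fintype.card_fin]
  congr 1
  omega

theorem mem_boundedHeightRoots {q : ℤ[X]} (hdeg : q.natDegree ≤ D)
    (hcoeff : ∀ i, |q.coeff i| ≤ B) (hq : q ≠ 0) {r : ℝ} (hr : aeval r q = 0) :
    r ∈ boundedHeightRoots D B :=
  Finset.mem_biUnion.mpr ⟨q, mem_boundedHeightPolys hdeg hcoeff,
    Multiset.mem_toFinset.mpr (mem_aroots.mpr ⟨hq, hr⟩)⟩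

theorem card_boundedHeightRoots_le : (boundedHeightRoots D B).card ≤ (2 * B + 1) ^ (D + 1) * D :=
  calc (boundedHeightRoots D B).card
      ≤ ∑ q ∈ boundedHeightPolys D B, (q.aroots ℝ).toFinset.card := Finset.card_biUnion_le
    _ ≤ ∑ _q ∈ boundedHeightPolys D B, D := Finset.sum_le_sum fun q hq =>
        (Multiset.toFinset_card_le _).trans <| (card_roots' _).trans <|
          natDegree_map_le.trans (natDegree_le_of_mem_boundedHeightPolys hq)
    _ ≤ (2 * B + 1) ^ (D + 1) * D := by
        rw [Finset.sum_const, smul_eq_mul]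
        exact Nat.mul_le_mul_right _ card_boundedHeightPolys_le

theorem card_boundedHeightRoots_pow_le {L : ℕ} (hL : 2 ≤ L) :
    (boundedHeightRoots D (L ^ D)).card ≤ L ^ ((D + 2) ^ 2) := by
  have hL1 : 1 ≤ L := by omega
  have hheight : 2 * L ^ D + 1 ≤ L ^ (D + 2) := by
    calc 2 * L ^ D + 1 ≤ 3 * L ^ D := by linarith [Nat.one_le_pow D L hL1]
      _ ≤ L ^ 2 * L ^ D := Nat.mul_le_mul_right _ (by nlinarith)
      _ = L ^ (D + 2) := by ring
  have hdeg : D ≤ L ^ D := (Nat.lt_pow_self hL).le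
  calc (boundedHeightRoots D (L ^ D)).card ≤ (2 * L ^ D + 1) ^ (D + 1) * D :=
        card_boundedHeightRoots_le
    _ ≤ (L ^ (D + 2)) ^ (D + 1) * L ^ D := by gcongr
    _ = L ^ ((D + 2) * (D + 1) + D) := by ring
    _ ≤ L ^ ((D + 2) ^ 2) := Nat.pow_le_pow_right hL1 (by nlinarith)

theorem abs_coeff_le_of_norm_roots_le {q : ℤ[X]} (hq : q.Monic) (hdeg : q.natDegree ≤ D)
    {R : ℝ} (hroots : ∀ z : ℂ, aeval z q = 0 → ‖z‖ ≤ R) (i : ℕ) :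
    |(q.coeff i : ℝ)| ≤ (2 * max R 1) ^ D := by
  have hbdd := coeff_bdd_of_roots_le (Int.castRingHom ℂ) hq (IsAlgClosed.splits _) hdeg
    (fun z hz => hroots z <|
      (mem_roots_map_of_injective (RingHom.injective_int _) hq.ne_zero).mp hz) i
  rw [coeff_map, eq_intCast, Complex.norm_intCast] at hbdd
  calc |(q.coeff i : ℝ)| ≤ max R 1 ^ D * D.choose (D / 2) := hbdd
    _ ≤ max R 1 ^ D * 2 ^ D := by gcongr; exact_mod_cast Nat.choose_le_two_pow D _
    _ = (2 * max R 1) ^ D := by ring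

end Polynomial

theorem Matrix.IsSymm.exists_mem_boundedHeightRoots {ι : Type*} [Fintype ι] [DecidableEq ι]
    {A : Matrix ι ι ℤ} (hA : A.IsSymm) {R : ℝ} (hR : ∀ w : ℂ, aeval w A.charpoly = 0 → ‖w‖ ≤ R)
    {D L : ℕ} (hL : 2 * max R 1 ≤ L) {z : ℂ} (hz : aeval z A.charpoly = 0)
    (hdeg : (minpoly ℚ z).natDegree ≤ D) :
    ∃ r ∈ boundedHeightRoots D (L ^ D), (r : ℂ) = z := by
  have hint : IsIntegral ℤ z := ⟨A.charpoly, A.charpoly_monic, by rwa [← aeval_def]⟩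
  set q := minpoly ℤ z
  have hqdeg : q.natDegree ≤ D := by
    rwa [minpoly.isIntegrallyClosed_eq_field_fractions' ℚ hint,
      natDegree_map_eq_of_injective (algebraMap ℤ ℚ).injective_int] at hdeg
  have hroots (w : ℂ) (hw : aeval w q = 0) : ‖w‖ ≤ R := by
    obtain ⟨p, hp⟩ := minpoly.isIntegrallyClosed_dvd hint hz
    exact hR w (by rw [hp, map_mul, hw, zero_mul])
  have hcoeff (i : ℕ) : |q.coeff i| ≤ ((L ^ D : ℕ) : ℤ) := by
    have := (abs_coeff_le_of_norm_roots_le (minpoly.monic hint) hqdeg hroots i).trans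
      (pow_le_pow_left₀ (by positivity) hL D)
    exact_mod_cast this
  obtain ⟨r, rfl⟩ := hA.exists_ofReal_eq_of_aeval_charpoly_eq_zero hz
  refine ⟨r, mem_boundedHeightRoots hqdeg hcoeff (minpoly.ne_zero hint) ?_, rfl⟩
  apply (algebraMap ℝ ℂ).injective
  rw [← aeval_algebraMap_apply, map_zero]
  exact minpoly.aeval ℤ _

theorem eventually_mul_log_mul_le_rpow {δ : ℝ} (hδ : 0 < δ) (m : ℝ) {k : ℝ} (hk : 0 < k) :
    ∀ᶠ x : ℝ in atTop, m * log (k * x) ≤ x ^ δ := by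
  have hlittle : (fun x => m * log k + m * log x) =o[atTop] fun x => x ^ δ :=
    (Asymptotics.isLittleO_const_left.mpr <| Or.inr <|
        tendsto_norm_atTop_atTop.comp (tendsto_rpow_atTop hδ)).add
      ((isLittleO_log_rpow_atTop hδ).const_mul_left m)
  filter_upwards [hlittle.bound one_pos, eventually_gt_atTop 0] with x hx hx0
  rw [log_mul hk.ne' hx0.ne', mul_add]
  rw [one_mul, norm_of_nonneg (rpow_nonneg hx0.le δ)] at hx
  exact (le_abs_self _).trans hx

theorem eventually_mul_pow_le_exp {c c' : ℝ} (hc'0 : 0 < c') (hc' : c' < c / 2) {k : ℝ}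
    (hk : 1 ≤ k) :
    ∀ᶠ x : ℝ in atTop, (k * x) ^ ((⌊x ^ c'⌋₊ + 2) ^ 2) ≤ exp (x ^ c / 4) := by
  filter_upwards [eventually_mul_log_mul_le_rpow (by linarith : 0 < c - 2 * c') 36
    (by linarith : 0 < k), eventually_ge_atTop 1] with x hlog hx
  have hx0 : 0 < x := by linarith
  have hkx : 1 ≤ k * x := one_le_mul_of_one_le_of_one_le hk hx
  have hxc' : 1 ≤ x ^ c' := one_le_rpow hx hc'0.le
  have hdeg : ((⌊x ^ c'⌋₊ + 2 : ℕ) : ℝ) ^ 2 ≤ 9 * x ^ (2 * c') := by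
    have : ((⌊x ^ c'⌋₊ + 2 : ℕ) : ℝ) ≤ 3 * x ^ c' := by
      push_cast
      linarith [Nat.floor_le (zero_le_one.trans hxc')]
    have hsq : x ^ (2 * c') = (x ^ c') ^ 2 := by
      rw [← rpow_natCast, ← rpow_mul hx0.le]; ring_nf
    rw [hsq]
    nlinarith [Nat.cast_nonneg (α := ℝ) (⌊x ^ c'⌋₊ + 2)]
  rw [← exp_log (by positivity : 0 < (k * x) ^ ((⌊x ^ c'⌋₊ + 2) ^ 2)), exp_le_exp, log_pow]
  calc (((⌊x ^ c'⌋₊ + 2) ^ 2 : ℕ) : ℝ) * log (k * x)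
      ≤ 9 * x ^ (2 * c') * log (k * x) := by
        push_cast at hdeg ⊢
        gcongr
        exact log_nonneg hkx
    _ = x ^ (2 * c') * (36 * log (k * x)) / 4 := by ring
    _ ≤ x ^ (2 * c') * x ^ (c - 2 * c') / 4 := by gcongr
    _ = x ^ c / 4 := by rw [← rpow_add hx0]; ring_nf

theorem eventually_two_mul_exp_add_le {c : ℝ} (hc0 : 0 < c) (hc1 : c < 1) :
    ∀ᶠ x : ℝ in atTop,
      2 * exp (-x) + exp (x ^ c / 4) * (2 * exp (-x ^ c)) ≤ exp (-x ^ c / 2) := by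
  filter_upwards [eventually_ge_atTop 1, eventually_ge_atTop (2 * log 4),
    (tendsto_rpow_atTop hc0).eventually_ge_atTop (4 * log 4)] with x hx1 hx hxc
  have hcx : x ^ c ≤ x := by simpa using rpow_le_rpow_of_exponent_le hx1 hc1.le
  have hquarter (y : ℝ) (hy : y ≤ -x ^ c / 2 - log 4) : 2 * exp y ≤ exp (-x ^ c / 2) / 2 := by
    have := exp_le_exp.mpr hy
    rw [exp_sub, exp_log (by norm_num)] at this
    linarith
  have h1 := hquarter (-x) (by linarith)
  have h2 := hquarter (x ^ c / 4 + -x ^ c) (by linarith)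
  rw [exp_add] at h2
  linarith

theorem two_mul_max_mul_sqrt_le (C : ℝ) {n : ℕ} (hn : 1 ≤ n) :
    2 * max (C * √n) 1 ≤ ((2 * (⌈C⌉₊ + 1) * n : ℕ) : ℝ) := by
  have hn' : (1 : ℝ) ≤ n := by exact_mod_cast hn
  have hCn : C * √n ≤ ⌈C⌉₊ * n :=
    mul_le_mul (Nat.le_ceil C) (sqrt_le_self_iff.mpr (Or.inr hn')) (sqrt_nonneg _) (by positivity)
  have hmax : max (C * √n) 1 ≤ (⌈C⌉₊ + 1) * n := max_le (by linarith) (by nlinarith)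
  push_cast
  linarith

theorem eventually_card_boundedHeightRoots_le_exp {c c' : ℝ} (hc'0 : 0 < c') (hc' : c' < c / 2)
    (C : ℝ) :
    ∀ᶠ n : ℕ in atTop, ((boundedHeightRoots ⌊(n : ℝ) ^ c'⌋₊
      ((2 * (⌈C⌉₊ + 1) * n) ^ ⌊(n : ℝ) ^ c'⌋₊)).card : ℝ) ≤ exp ((n : ℝ) ^ c / 4) := by
  filter_upwards [eventually_ge_atTop 1, tendsto_natCast_atTop_atTop.eventually <|
    eventually_mul_pow_le_exp hc'0 hc' (k := 2 * (⌈C⌉₊ + 1)) (by linarith)] with n hn hpow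
  have hL : 2 ≤ 2 * (⌈C⌉₊ + 1) * n := by nlinarith
  calc _ ≤ (((2 * (⌈C⌉₊ + 1) * n) ^ ((⌊(n : ℝ) ^ c'⌋₊ + 2) ^ 2) : ℕ) : ℝ) := by
        exact_mod_cast card_boundedHeightRoots_pow_le hL
    _ ≤ exp ((n : ℝ) ^ c / 4) := by push_cast; exact hpow

theorem symmetric_matrix_low_degree_eigenvalues_general
    (c C c' : ℝ) (hc0 : 0 < c) (hc1 : c < 1) (hc'0 : 0 < c') (hc' : c' < c / 2)
    {α : Type*} [MeasurableSpace α] (P : Measure α) [IsProbabilityMeasure P]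
    (M : (n : ℕ) → α → Matrix (Fin n) (Fin n) ℤ)
    (hsymm : ∀ n ω, (M n ω).IsSymm)
    (hdeloc : ∀ n : ℕ, ∀ r : ℝ,
      (P {ω | Polynomial.aeval (r : ℂ) (Matrix.charpoly (M n ω)) = 0}).toReal
        ≤ 2 * Real.exp (-(n : ℝ) ^ c))
    (hbound : ∀ n : ℕ,
      (P {ω | ∃ z : ℂ, Polynomial.aeval z (Matrix.charpoly (M n ω)) = 0 ∧
          C * Real.sqrt n < ‖z‖}).toReal ≤ 2 * Real.exp (-(n : ℝ))) :
    ∃ N : ℕ, ∀ n : ℕ, N ≤ n →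
      (P {ω | ∃ z : ℂ, Polynomial.aeval z (Matrix.charpoly (M n ω)) = 0 ∧
          IsAlgebraic ℚ z ∧
          ((minpoly ℚ z).natDegree : ℝ) ≤ (n : ℝ) ^ c'}).toReal
        ≤ Real.exp (-(n : ℝ) ^ c / 2) := by
  obtain ⟨N, hN⟩ := eventually_atTop.mp <| (eventually_ge_atTop 1).and <|
    (eventually_card_boundedHeightRoots_le_exp hc'0 hc' C).and <|
      tendsto_natCast_atTop_atTop.eventually (eventually_two_mul_exp_add_le hc0 hc1)
  refine ⟨N, fun n hn => ?_⟩
  obtain ⟨hn1, hcard, htail⟩ := hN n hn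
  set S := boundedHeightRoots ⌊(n : ℝ) ^ c'⌋₊ ((2 * (⌈C⌉₊ + 1) * n) ^ ⌊(n : ℝ) ^ c'⌋₊)
  have hcover : {ω | ∃ z : ℂ, aeval z (M n ω).charpoly = 0 ∧ IsAlgebraic ℚ z ∧
        ((minpoly ℚ z).natDegree : ℝ) ≤ (n : ℝ) ^ c'} ⊆
      {ω | ∃ z : ℂ, aeval z (M n ω).charpoly = 0 ∧ C * √n < ‖z‖} ∪
        ⋃ r ∈ S, {ω | aeval (r : ℂ) (M n ω).charpoly = 0} := by
    rintro ω ⟨z, hz, -, hdeg⟩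
    by_cases hbig : ∃ w : ℂ, aeval w (M n ω).charpoly = 0 ∧ C * √n < ‖w‖
    · exact Or.inl hbig
    push Not at hbig
    obtain ⟨r, hr, rfl⟩ := (hsymm n ω).exists_mem_boundedHeightRoots hbig
      (two_mul_max_mul_sqrt_le C hn1) hz (Nat.le_floor hdeg)
    exact Or.inr (Set.mem_biUnion hr hz)
  calc P.real _ ≤ P.real {ω | ∃ z : ℂ, aeval z (M n ω).charpoly = 0 ∧ C * √n < ‖z‖} +
        ∑ r ∈ S, P.real {ω | aeval (r : ℂ) (M n ω).charpoly = 0} :=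
        (measureReal_mono hcover).trans <| (measureReal_union_le _ _).trans <|
          add_le_add_right (measureReal_biUnion_finset_le _ _) _
    _ ≤ 2 * exp (-n) + S.card * (2 * exp (-(n : ℝ) ^ c)) := by
        gcongr
        · exact hbound n
        · exact (Finset.sum_le_card_nsmul S _ _ fun r _ => hdeloc n r).trans_eq
            (nsmul_eq_mul _ _)
    _ ≤ 2 * exp (-n) + exp ((n : ℝ) ^ c / 4) * (2 * exp (-(n : ℝ) ^ c)) := by gcongr
    _ ≤ exp (-(n : ℝ) ^ c / 2) := htail

/-- If a random `n × n` symmetric integer matrix satisfies the pointwise delocalization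
bound `ℙ(r is an eigenvalue) ≤ 2 exp(-n^c)` for every real `r`, and its eigenvalues all lie
in `{|z| ≤ C √n}` except with probability `2 exp(-n)`, then for all sufficiently large `n`
the probability that it has an eigenvalue that is algebraic of degree at most `n^(c')` is
at most `exp(-n^c / 2)`. -/
theorem symmetric_matrix_low_degree_eigenvalues
    (c C c' : ℝ) (hc0 : 0 < c) (hc1 : c < 1) (hC : 0 < C) (hc'0 : 0 < c') (hc' : c' < c / 2)
    {α : Type*} [MeasurableSpace α] (P : Measure α) [IsProbabilityMeasure P]
    (M : (n : ℕ) → α → Matrix (Fin n) (Fin n) ℤ)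
    (hsymm : ∀ n ω, (M n ω).IsSymm)
    (hdeloc : ∀ n : ℕ, ∀ r : ℝ,
      (P {ω | Polynomial.aeval (r : ℂ) (Matrix.charpoly (M n ω)) = 0}).toReal
        ≤ 2 * Real.exp (-(n : ℝ) ^ c))
    (hbound : ∀ n : ℕ,
      (P {ω | ∃ z : ℂ, Polynomial.aeval z (Matrix.charpoly (M n ω)) = 0 ∧
          C * Real.sqrt n < ‖z‖}).toReal ≤ 2 * Real.exp (-(n : ℝ))) :
    ∃ N : ℕ, ∀ n : ℕ, N ≤ n →
      (P {ω | ∃ z : ℂ, Polynomial.aeval z (Matrix.charpoly (M n ω)) = 0 ∧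
          IsAlgebraic ℚ z ∧
          ((minpoly ℚ z).natDegree : ℝ) ≤ (n : ℝ) ^ c'}).toReal
        ≤ Real.exp (-(n : ℝ) ^ c / 2) :=
  symmetric_matrix_low_degree_eigenvalues_general c C c' hc0 hc1 hc'0 hc' P M hsymm hdeloc hbound
end

section
/- For every real M ≥ 1 and every integer k ≥ 2, one has M^((k²+k)/2) · exp((k² − k·log k)/2) ≤ ∏_{j=1}^{k} (2·C(k,j)·M^j + 1) ≤ (e·M)^((k²+k)/2), where C(k,j) is the binomial coefficient. Moreover, for k = 1 the product 2·C(1,1)·M + 1 is at most 3M. -/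
/-!
With `G k = ∏_{j=1}^k C(k,j)`, the identity `(k+1) C(k,j) = C(k+1,j+1) (j+1)` gives
`G (k+1) (k+1)! = (k+1)^(k+1) G k`, so `G` grows by the factor `n^n / n!` at step `n`.
Stirling's bounds `√(2πn) (n/e)^n ≤ n! ≤ e √n (n/e)^n` then give, by induction on `k`,
`exp ((k² - k log k)/2) ≤ 2^k G k` (using `log 2 > 1/2`) and, for `k ≥ 2`,
`3^k G k ≤ exp ((k² + k)/2)` (using `9 ≤ 2πn` for `n ≥ 3` and `18 ≤ e³` at `k = 2`).
For `M ≥ 1` each factor satisfies `2 C(k,j) M^j ≤ 2 C(k,j) M^j + 1 ≤ 3 C(k,j) M^j`, and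
`∏_{j=1}^k M^j = M^((k² + k)/2)`.
-/

open Real Finset
open scoped Nat

theorem prod_Icc_one_eq_prod_range {M : Type*} [CommMonoid M] (f : ℕ → M) (n : ℕ) :
    ∏ j ∈ Icc 1 n, f j = ∏ j ∈ range n, f (j + 1) := by
  rw [← Ico_add_one_right_eq_Icc, prod_Ico_eq_prod_range]
  simp [add_comm]

theorem prod_choose_succ_mul_factorial (k : ℕ) :
    (∏ j ∈ Icc 1 (k + 1), (k + 1).choose j) * (k + 1)! =
      (k + 1) ^ (k + 1) * ∏ j ∈ Icc 1 k, k.choose j := by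
  have h := prod_congr rfl fun j (_ : j ∈ range (k + 1)) => Nat.add_one_mul_choose_eq k j
  rw [prod_mul_distrib, prod_mul_distrib, prod_const, card_range, prod_range_add_one_eq_factorial,
    prod_range_succ', Nat.choose_zero_right, mul_one] at h
  rw [prod_Icc_one_eq_prod_range, prod_Icc_one_eq_prod_range, ← h]

theorem log_factorial_le_stirling {n : ℕ} (hn : n ≠ 0) :
    log n ! ≤ n * log n - n + log n / 2 + 1 := by
  obtain ⟨m, rfl⟩ := Nat.exists_eq_add_one_of_ne_zero hn
  have h : log (Stirling.stirlingSeq (m + 1)) ≤ log (Stirling.stirlingSeq 1) :=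
    Stirling.log_stirlingSeq'_antitone (Nat.zero_le m)
  rw [Stirling.log_stirlingSeq_formula, Stirling.stirlingSeq_one, log_div (exp_ne_zero 1)
    (by positivity), log_exp, log_sqrt zero_le_two, log_div (by positivity) (exp_ne_zero 1), log_exp,
    log_mul two_ne_zero (by positivity)] at h
  linarith

theorem prod_choose_pos (k : ℕ) : 0 < ∏ j ∈ Icc 1 k, (k.choose j : ℝ) :=
  prod_pos fun _ hj => Nat.cast_pos.2 (Nat.choose_pos (mem_Icc.1 hj).2)

theorem log_prod_choose_succ (k : ℕ) :
    log (∏ j ∈ Icc 1 (k + 1), ((k + 1).choose j : ℝ)) =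
      log (∏ j ∈ Icc 1 k, (k.choose j : ℝ)) + (k + 1) * log (k + 1) - log (k + 1)! := by
  have h := congrArg (fun n : ℕ => log n) (prod_choose_succ_mul_factorial k)
  simp only [Nat.cast_mul, Nat.cast_prod, Nat.cast_pow] at h
  rw [log_mul (prod_choose_pos _).ne' (by positivity), log_mul (by positivity)
    (prod_choose_pos k).ne', log_pow] at h
  push_cast at h ⊢
  linarith

theorem exp_le_two_pow_mul_prod_choose (k : ℕ) :
    exp (((k : ℝ) ^ 2 - k * log k) / 2) ≤ 2 ^ k * ∏ j ∈ Icc 1 k, (k.choose j : ℝ) := by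
  rw [← le_log_iff_exp_le (mul_pos (by positivity) (prod_choose_pos k)),
    log_mul (by positivity) (prod_choose_pos k).ne', log_pow]
  induction k with
  | zero => simp
  | succ k ih =>
    have hrec := log_prod_choose_succ k
    have hfact := log_factorial_le_stirling k.succ_ne_zero
    have hlog_mono : (k : ℝ) * log k ≤ k * log (k + 1) := by
      rcases k.eq_zero_or_pos with rfl | hk
      · simp
      · exact mul_le_mul_of_nonneg_left (log_le_log (by positivity) (by linarith)) k.cast_nonneg
    have hlog2 := log_two_gt_d9
    push_cast at *
    linarith

theorem three_pow_mul_prod_choose_le_exp {k : ℕ} (hk : 2 ≤ k) :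
    3 ^ k * ∏ j ∈ Icc 1 k, (k.choose j : ℝ) ≤ exp (((k : ℝ) ^ 2 + k) / 2) := by
  rw [← log_le_iff_le_exp (mul_pos (by positivity) (prod_choose_pos k)),
    log_mul (by positivity) (prod_choose_pos k).ne', log_pow]
  induction k, hk using Nat.le_induction with
  | base =>
    have hprod : ∏ j ∈ Icc 1 2, ((Nat.choose 2 j : ℕ) : ℝ) = 2 := by
      norm_num [prod_Icc_succ_top]
    have he : (18 : ℝ) ≤ exp 3 :=
      calc (18 : ℝ) ≤ 2.7 ^ 3 := by norm_num
        _ ≤ exp 1 ^ 3 := pow_le_pow_left₀ (by norm_num) (by linarith [exp_one_gt_d9]) 3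
        _ = exp 3 := by rw [← exp_nat_mul]; norm_num
    have hlog18 : log 18 = 2 * log 3 + log 2 := by
      rw [show (18 : ℝ) = 3 ^ 2 * 2 by norm_num, log_mul (by positivity) two_ne_zero, log_pow]
      norm_num
    rw [hprod]
    push_cast
    linarith [(log_le_iff_le_exp (by norm_num)).2 he]
  | succ k hk ih =>
    have hrec := log_prod_choose_succ k
    have hfact := Stirling.le_log_factorial_stirling k.succ_ne_zero
    have h9 : 2 * log 3 ≤ log (2 * π) + log (k + 1) := by
      have : (9 : ℝ) ≤ 2 * π * (k + 1) := by
        have : (2 : ℝ) ≤ k := by exact_mod_cast hk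
        nlinarith [pi_gt_three]
      rw [← log_mul (by positivity) (by positivity), ← log_rpow three_pos]
      exact log_le_log (by norm_num) (by norm_num; linarith)
    push_cast at *
    linarith

theorem sum_Icc_one_id (k : ℕ) : ((∑ j ∈ Icc 1 k, j : ℕ) : ℝ) = ((k : ℝ) ^ 2 + k) / 2 := by
  induction k with
  | zero => simp
  | succ k ih =>
    rw [sum_Icc_succ_top (by omega), Nat.cast_add, ih]
    push_cast
    ring

theorem prod_Icc_one_pow (x : ℝ) (k : ℕ) : ∏ j ∈ Icc 1 k, x ^ j = x ^ (((k : ℝ) ^ 2 + k) / 2) := by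
  rw [prod_pow_eq_pow_sum, ← sum_Icc_one_id, rpow_natCast]

theorem prod_mul_choose_mul_pow (c x : ℝ) (k : ℕ) :
    ∏ j ∈ Icc 1 k, (c * k.choose j * x ^ j) =
      c ^ k * (∏ j ∈ Icc 1 k, (k.choose j : ℝ)) * x ^ (((k : ℝ) ^ 2 + k) / 2) := by
  rw [prod_mul_distrib, prod_mul_distrib, prod_const, Nat.card_Icc, Nat.add_sub_cancel,
    prod_Icc_one_pow]

/-- For `M ≥ 1` and `k ≥ 2`,
`M^((k²+k)/2) exp((k² - k log k)/2) ≤ ∏_{j=1}^k (2 C(k,j) M^j + 1) ≤ (e M)^((k²+k)/2)`;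
and for `k = 1` the product `2 C(1,1) M + 1` is at most `3M`. -/
theorem product_bounds (M : ℝ) (hM : 1 ≤ M) :
    (∀ k : ℕ, 2 ≤ k →
      M ^ (((k : ℝ) ^ 2 + k) / 2) * Real.exp (((k : ℝ) ^ 2 - k * Real.log k) / 2)
          ≤ ∏ j ∈ Finset.Icc 1 k, (2 * (k.choose j) * M ^ j + 1) ∧
        ∏ j ∈ Finset.Icc 1 k, (2 * (k.choose j) * M ^ j + 1)
          ≤ (Real.exp 1 * M) ^ (((k : ℝ) ^ 2 + k) / 2)) ∧
    2 * (Nat.choose 1 1) * M + 1 ≤ 3 * M := by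
  have hM0 : 0 ≤ M := zero_le_one.trans hM
  refine ⟨fun k hk => ⟨?_, ?_⟩, by norm_num; linarith⟩
  · calc M ^ (((k : ℝ) ^ 2 + k) / 2) * exp (((k : ℝ) ^ 2 - k * log k) / 2)
        ≤ M ^ (((k : ℝ) ^ 2 + k) / 2) * (2 ^ k * ∏ j ∈ Icc 1 k, (k.choose j : ℝ)) :=
          mul_le_mul_of_nonneg_left (exp_le_two_pow_mul_prod_choose k) (by positivity)
      _ = ∏ j ∈ Icc 1 k, (2 * k.choose j * M ^ j) := by rw [prod_mul_choose_mul_pow]; ring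
      _ ≤ ∏ j ∈ Icc 1 k, (2 * k.choose j * M ^ j + 1) :=
          prod_le_prod (fun _ _ => by positivity) fun _ _ => by linarith
  · calc ∏ j ∈ Icc 1 k, (2 * k.choose j * M ^ j + 1)
        ≤ ∏ j ∈ Icc 1 k, (3 * k.choose j * M ^ j) := by
          refine prod_le_prod (fun _ _ => by positivity) fun j hj => ?_
          have : 1 ≤ (k.choose j : ℝ) * M ^ j := one_le_mul_of_one_le_of_one_le
            (Nat.one_le_cast.2 (Nat.choose_pos (mem_Icc.1 hj).2)) (one_le_pow₀ hM)
          linarith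
      _ = 3 ^ k * (∏ j ∈ Icc 1 k, (k.choose j : ℝ)) * M ^ (((k : ℝ) ^ 2 + k) / 2) :=
          prod_mul_choose_mul_pow 3 M k
      _ ≤ exp (((k : ℝ) ^ 2 + k) / 2) * M ^ (((k : ℝ) ^ 2 + k) / 2) :=
          mul_le_mul_of_nonneg_right (three_pow_mul_prod_choose_le_exp hk) (by positivity)
      _ = (exp 1 * M) ^ (((k : ℝ) ^ 2 + k) / 2) := by
          rw [mul_rpow (exp_pos 1).le hM0, exp_one_rpow]
end

section
/- For every real M ≥ 1 and every integer k ≥ 2, one has ∑_{l=1}^{k} l · ∏_{j=1}^{l} (2·C(l,j)·M^j + 1) ≤ (e·M)^(k²), where C(l,j) is the binomial coefficient. For k = 1 the sum is at most 3M. -/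
/-!
Bounding each factor by `3 M^l C(l,j)` reduces the claim to `∏_j C(l,j) ≤ e^C(l,2)` and an
elementary estimate of `∑_l l 3^l e^C(l,2)`. The product of binomial coefficients satisfies
`(∏_j C(n+1,j)) (n+1)! = (n+1)^(n+1) ∏_j C(n,j)`, and `(n+1)^n ≤ e^n n!` follows from
`(1 + 1/n)^n ≤ e`. The sum gains at most a factor `1 + (k+1) 3^(k+1) ≤ e^(2k+1)` from `k` to `k+1`.
-/

open Finset Real
open scoped Nat

theorem add_one_pow_le_exp_one_pow_mul_factorial (n : ℕ) :
    ((n : ℝ) + 1) ^ n ≤ exp 1 ^ n * n ! := by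
  induction n with
  | zero => simp
  | succ n ih =>
    have hn : ((n + 1 : ℕ) : ℝ) + 1 = (1 + ((n + 1 : ℕ) : ℝ)⁻¹) * (n + 1) := by
      push_cast; field_simp
    calc ((n + 1 : ℕ) + 1 : ℝ) ^ (n + 1)
        = (1 + ((n + 1 : ℕ) : ℝ)⁻¹) ^ (n + 1) * ((n + 1) * (n + 1) ^ n) := by
          rw [hn, mul_pow, pow_succ' ((n : ℝ) + 1)]
      _ ≤ exp 1 * ((n + 1) * (exp 1 ^ n * n !)) := by
          gcongr
          exact one_add_inv_pow_le_exp
      _ = exp 1 ^ (n + 1) * (n + 1)! := by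
          push_cast [Nat.factorial_succ]; ring

theorem prod_range_choose_succ_mul_factorial (n : ℕ) :
    (∏ j ∈ range (n + 2), (n + 1).choose j) * (n + 1)! =
      (n + 1) ^ (n + 1) * ∏ j ∈ range (n + 1), n.choose j := by
  rw [prod_range_succ', ← prod_range_add_one_eq_factorial, Nat.choose_zero_right, mul_one,
    ← prod_mul_distrib, ← card_range (n + 1), ← prod_const, card_range, ← prod_mul_distrib]
  exact prod_congr rfl fun j _ => (Nat.add_one_mul_choose_eq n j).symm

theorem prod_range_choose_le_exp_one_pow (n : ℕ) :
    ∏ j ∈ range (n + 1), (n.choose j : ℝ) ≤ exp 1 ^ n.choose 2 := by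
  induction n with
  | zero => simp
  | succ n ih =>
    have key : (∏ j ∈ range (n + 2), ((n + 1).choose j : ℝ)) * (n + 1)! =
        (n + 1) ^ (n + 1) * ∏ j ∈ range (n + 1), (n.choose j : ℝ) := by
      exact_mod_cast prod_range_choose_succ_mul_factorial n
    refine le_of_mul_le_mul_right ?_ (by positivity : (0 : ℝ) < (n + 1)!)
    rw [key, Nat.choose_succ_succ', Nat.choose_one_right]
    calc ((n : ℝ) + 1) ^ (n + 1) * ∏ j ∈ range (n + 1), (n.choose j : ℝ)
        = (n + 1) * (n + 1) ^ n * ∏ j ∈ range (n + 1), (n.choose j : ℝ) := by ring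
      _ ≤ (n + 1) * (exp 1 ^ n * n !) * exp 1 ^ n.choose 2 := by
          gcongr
          exact add_one_pow_le_exp_one_pow_mul_factorial n
      _ = exp 1 ^ (n + n.choose 2) * (n + 1)! := by
          push_cast [Nat.factorial_succ, pow_add]; ring

theorem prod_Icc_choose_le_exp_one_pow (n : ℕ) :
    ∏ j ∈ Icc 1 n, (n.choose j : ℝ) ≤ exp 1 ^ n.choose 2 := by
  simpa [prod_range_eq_mul_Ico _ n.succ_pos, Ico_add_one_right_eq_Icc] using
    prod_range_choose_le_exp_one_pow n

theorem prod_two_mul_choose_mul_pow_add_one_le {M : ℝ} (hM : 1 ≤ M) (n : ℕ) :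
    ∏ j ∈ Icc 1 n, (2 * n.choose j * M ^ j + 1) ≤ 3 ^ n * exp 1 ^ n.choose 2 * M ^ (n ^ 2) := by
  calc ∏ j ∈ Icc 1 n, (2 * n.choose j * M ^ j + 1)
      ≤ ∏ j ∈ Icc 1 n, (3 * M ^ n * n.choose j) := by
        refine prod_le_prod (fun _ _ => by positivity) fun j hj => ?_
        obtain ⟨-, hjn⟩ := mem_Icc.mp hj
        have hchoose : (1 : ℝ) ≤ n.choose j := by exact_mod_cast Nat.choose_pos hjn
        have hMj : 1 ≤ M ^ j := one_le_pow₀ hM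
        have hMjn : M ^ j ≤ M ^ n := pow_le_pow_right₀ hM hjn
        nlinarith
    _ = (3 * M ^ n) ^ n * ∏ j ∈ Icc 1 n, (n.choose j : ℝ) := by
        rw [prod_mul_distrib, prod_const, Nat.card_Icc, Nat.add_sub_cancel]
    _ ≤ (3 * M ^ n) ^ n * exp 1 ^ n.choose 2 := by
        gcongr
        exact prod_Icc_choose_le_exp_one_pow n
    _ = 3 ^ n * exp 1 ^ n.choose 2 * M ^ (n ^ 2) := by ring

theorem one_add_mul_three_pow_le_exp_one_pow {k : ℕ} (hk : 1 ≤ k) :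
    1 + ((k : ℝ) + 1) * 3 ^ (k + 1) ≤ exp 1 ^ (2 * k + 1) := by
  have he := exp_one_gt_d9
  induction k, hk using Nat.le_induction with
  | base =>
    have : (2.7182818283 : ℝ) ^ 3 ≤ exp 1 ^ 3 := by gcongr
    norm_num at this ⊢
    linarith
  | succ k _ ih =>
    have he2 : (7 : ℝ) ≤ exp 1 ^ 2 := by nlinarith
    have h3 : (0 : ℝ) ≤ 3 ^ (k + 1) := by positivity
    calc 1 + ((k + 1 : ℕ) + 1 : ℝ) * 3 ^ (k + 1 + 1)
        ≤ (1 + ((k : ℝ) + 1) * 3 ^ (k + 1)) * 7 := by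
          push_cast; rw [pow_succ]; nlinarith
      _ ≤ exp 1 ^ (2 * k + 1) * exp 1 ^ 2 := by gcongr
      _ = exp 1 ^ (2 * (k + 1) + 1) := by ring

theorem sum_mul_three_pow_mul_exp_one_pow_le {k : ℕ} (hk : 2 ≤ k) :
    ∑ l ∈ Icc 1 k, (l : ℝ) * 3 ^ l * exp 1 ^ l.choose 2 ≤ exp 1 ^ (k ^ 2) := by
  induction k, hk using Nat.le_induction with
  | base =>
    have h1 := exp_one_gt_d9
    have h2 := exp_one_lt_d9
    have : (2.7182818283 : ℝ) ^ 4 ≤ exp 1 ^ 4 := by gcongr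
    rw [show Icc 1 2 = {1, 2} by rfl]
    norm_num [-exp_one_pow]
    linarith
  | succ k hk ih =>
    have hexp : exp 1 ^ (k + 1).choose 2 ≤ exp 1 ^ (k ^ 2) := by
      refine pow_le_pow_right₀ (one_le_exp zero_le_one) ?_
      rw [Nat.choose_two_right, Nat.add_sub_cancel]
      exact Nat.div_le_of_le_mul (by nlinarith)
    rw [sum_Icc_succ_top (by omega)]
    calc ∑ l ∈ Icc 1 k, (l : ℝ) * 3 ^ l * exp 1 ^ l.choose 2
          + ((k + 1 : ℕ) : ℝ) * 3 ^ (k + 1) * exp 1 ^ (k + 1).choose 2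
        ≤ exp 1 ^ (k ^ 2) + ((k : ℝ) + 1) * 3 ^ (k + 1) * exp 1 ^ (k ^ 2) := by
          push_cast; gcongr
      _ = exp 1 ^ (k ^ 2) * (1 + ((k : ℝ) + 1) * 3 ^ (k + 1)) := by ring
      _ ≤ exp 1 ^ (k ^ 2) * exp 1 ^ (2 * k + 1) := by
          gcongr; exact one_add_mul_three_pow_le_exp_one_pow (by omega)
      _ = exp 1 ^ ((k + 1) ^ 2) := by ring

/-- For `M ≥ 1` and `k ≥ 2`,
`∑_{l=1}^k l ∏_{j=1}^l (2 C(l,j) M^j + 1) ≤ (e M)^(k²)`; for `k = 1` the sum is at most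
`3M`. -/
theorem sum_bound (M : ℝ) (hM : 1 ≤ M) :
    (∀ k : ℕ, 2 ≤ k →
      ∑ l ∈ Finset.Icc 1 k, (l : ℝ) * ∏ j ∈ Finset.Icc 1 l, (2 * (l.choose j) * M ^ j + 1)
        ≤ (Real.exp 1 * M) ^ (k ^ 2)) ∧
    ∑ l ∈ Finset.Icc (1 : ℕ) 1, (l : ℝ) * ∏ j ∈ Finset.Icc 1 l, (2 * (l.choose j) * M ^ j + 1)
      ≤ 3 * M := by
  refine ⟨fun k hk => ?_, by norm_num; linarith⟩
  calc ∑ l ∈ Icc 1 k, (l : ℝ) * ∏ j ∈ Icc 1 l, (2 * (l.choose j) * M ^ j + 1)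
      ≤ ∑ l ∈ Icc 1 k, (l : ℝ) * 3 ^ l * exp 1 ^ l.choose 2 * M ^ (k ^ 2) := by
        refine sum_le_sum fun l hl => ?_
        have hMl : M ^ (l ^ 2) ≤ M ^ (k ^ 2) :=
          pow_le_pow_right₀ hM (Nat.pow_le_pow_left (mem_Icc.mp hl).2 2)
        calc (l : ℝ) * ∏ j ∈ Icc 1 l, (2 * (l.choose j) * M ^ j + 1)
            ≤ l * (3 ^ l * exp 1 ^ l.choose 2 * M ^ (l ^ 2)) := by
              gcongr; exact prod_two_mul_choose_mul_pow_add_one_le hM l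
          _ ≤ l * 3 ^ l * exp 1 ^ l.choose 2 * M ^ (k ^ 2) := by
              rw [← mul_assoc, ← mul_assoc]; gcongr
    _ = (∑ l ∈ Icc 1 k, (l : ℝ) * 3 ^ l * exp 1 ^ l.choose 2) * M ^ (k ^ 2) := by
        rw [sum_mul]
    _ ≤ exp 1 ^ (k ^ 2) * M ^ (k ^ 2) := by
        gcongr; exact sum_mul_three_pow_mul_exp_one_pow_le hk
    _ = (exp 1 * M) ^ (k ^ 2) := by rw [mul_pow]
end

section
/- Let n ≥ 1 be such that n + 1 is prime and 2 generates the multiplicative group (ℤ/(n+1))^×, i.e., 2 is a primitive root modulo n+1. Then every polynomial f(z) = z^n + ξ_{n−1} z^{n−1} + ⋯ + ξ_1 z + ξ_0 with each coefficient ξ_j ∈ {1, −1} is irreducible over ℚ. -/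
/-!
Modulo 2 every coefficient `±1` becomes `1`, so `f` reduces to `1 + z + ⋯ + z^n`, the
`(n+1)`-st cyclotomic polynomial over `𝔽₂`. Its irreducible factors all have degree equal to the
order of `2` modulo `n + 1`, which is `n` because `2` is a primitive root. Hence `f` is irreducible
modulo 2, and a monic integer polynomial irreducible modulo a prime is irreducible over `ℚ`.
-/

open Polynomial

namespace Polynomial

theorem cyclotomic_zmod_irreducible_of_orderOf_eq_totient {ℓ n : ℕ} [Fact ℓ.Prime]
    (hℓn : ℓ.Coprime n) (hord : orderOf (ZMod.unitOfCoprime ℓ hℓn) = n.totient) :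
    Irreducible (cyclotomic n (ZMod ℓ)) :=
  ZMod.irreducible_of_dvd_cyclotomic_of_natDegree
    ((Nat.Prime.coprime_iff_not_dvd Fact.out).mp hℓn) dvd_rfl
    (by rw [natDegree_cyclotomic, ← hord])

theorem monic_X_pow_add_sum_C_mul_X_pow (n : ℕ) {R : Type*} [Semiring R] (a : ℕ → R) :
    (X ^ n + ∑ j ∈ Finset.range n, C (a j) * X ^ j).Monic := by
  refine monic_X_pow_add ((degree_sum_le _ _).trans_lt ?_)
  rw [Finset.sup_lt_iff (by exact_mod_cast WithBot.bot_lt_coe n)]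
  intro j hj
  exact (degree_C_mul_X_pow_le _ _).trans_lt (by exact_mod_cast Finset.mem_range.mp hj)

theorem map_zmod_two_eq_geom_sum_of_odd (n : ℕ) (ξ : ℕ → ℤ) (hξ : ∀ j < n, Odd (ξ j)) :
    (X ^ n + ∑ j ∈ Finset.range n, C (ξ j) * X ^ j).map (Int.castRingHom (ZMod 2)) =
      ∑ i ∈ Finset.range (n + 1), X ^ i := by
  rw [Finset.sum_range_succ, add_comm, Polynomial.map_add, Polynomial.map_pow, map_X,
    Polynomial.map_sum]
  congr 1
  refine Finset.sum_congr rfl fun j hj => ?_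
  rw [Polynomial.map_mul, Polynomial.map_pow, map_X, map_C, eq_intCast,
    ZMod.intCast_eq_one_iff_odd.mpr (hξ j (Finset.mem_range.mp hj)), map_one, one_mul]

theorem Monic.irreducible_map_rat_of_irreducible_map {f : ℤ[X]} (hf : f.Monic)
    {R : Type*} [CommRing R] [IsDomain R] (φ : ℤ →+* R) (h : Irreducible (f.map φ)) :
    Irreducible (f.map (Int.castRingHom ℚ)) :=
  hf.irreducible_iff_irreducible_map_fraction_map.mp (hf.irreducible_of_irreducible_map φ f h)

end Polynomial

theorem pm_one_irreducible_general (n : ℕ) (hprime : Nat.Prime (n + 1))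
    (hgen : ∃ g : (ZMod (n + 1))ˣ, ((g : ZMod (n + 1)) = 2) ∧
      ∀ u : (ZMod (n + 1))ˣ, u ∈ Subgroup.zpowers g)
    (ξ : ℕ → ℤ) (hξ : ∀ j < n, ξ j = 1 ∨ ξ j = -1) :
    Irreducible
      ((Polynomial.X ^ n +
          ∑ j ∈ Finset.range n, Polynomial.C (ξ j) * Polynomial.X ^ j).map
        (Int.castRingHom ℚ)) := by
  obtain ⟨g, hg2, hgen⟩ := hgen
  have hcop : Nat.Coprime 2 (n + 1) :=
    (ZMod.isUnit_iff_coprime 2 (n + 1)).mp (by exact_mod_cast hg2 ▸ g.isUnit)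
  have hord : orderOf (ZMod.unitOfCoprime 2 hcop) = (n + 1).totient := by
    rw [show ZMod.unitOfCoprime 2 hcop = g from Units.ext (by simp [hg2]),
      orderOf_eq_card_of_forall_mem_zpowers hgen, Nat.card_eq_fintype_card,
      ZMod.card_units_eq_totient]
  have hodd : ∀ j < n, Odd (ξ j) := fun j hj => by rcases hξ j hj with h | h <;> simp [h]
  refine (monic_X_pow_add_sum_C_mul_X_pow n ξ).irreducible_map_rat_of_irreducible_map
    (Int.castRingHom (ZMod 2)) ?_
  have := Fact.mk hprime
  rw [map_zmod_two_eq_geom_sum_of_odd n ξ hodd, ← cyclotomic_prime (ZMod 2) (n + 1)]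
  exact cyclotomic_zmod_irreducible_of_orderOf_eq_totient hcop hord

/-- If `n + 1` is prime and `2` is a primitive root modulo `n + 1` (i.e. `2` generates the
multiplicative group `(ℤ/(n+1))ˣ`), then every polynomial
`z^n + ξ_{n-1} z^{n-1} + ⋯ + ξ_0` with coefficients `ξ_j ∈ {1, -1}` is irreducible
over `ℚ`. -/
theorem pm_one_irreducible (n : ℕ) (hn : 1 ≤ n) (hprime : Nat.Prime (n + 1))
    (hgen : ∃ g : (ZMod (n + 1))ˣ, ((g : ZMod (n + 1)) = 2) ∧
      ∀ u : (ZMod (n + 1))ˣ, u ∈ Subgroup.zpowers g)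
    (ξ : ℕ → ℤ) (hξ : ∀ j < n, ξ j = 1 ∨ ξ j = -1) :
    Irreducible
      ((Polynomial.X ^ n +
          ∑ j ∈ Finset.range n, Polynomial.C (ξ j) * Polynomial.X ^ j).map
        (Int.castRingHom ℚ)) :=
  pm_one_irreducible_general n hprime hgen ξ hξ
end
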